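/- For natural numbers n and k with n ≥ 2k - 1 and k ≥ 1, the Kneser graph KG_{n,k} admits a proper coloring with n - 2k + 2 colors; equivalently, its chromatic number satisfies χ(KG_{n,k}) ≤ n - 2k + 2. -/

import Mathlib

def kneserGraph (n k : ℕ) : SimpleGraph {s : Finset (Fin n) // s.card = k} :=
  SimpleGraph.fromRel (fun A B => Disjoint A.1 B.1)

/-! Colour a `k`-set by its least element, truncated at `t = n - 2k + 1`. Sets whose least
element is below `t` share a colour only if they share that element; the sets with least
element at least `t` all live in `{t, …, n - 1}`, which has fewer than `2k` elements and so
contains no two disjoint `k`-sets. -/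

theorem Finset.card_le_sub_of_forall_le_val {n t : ℕ} {s : Finset (Fin n)}
    (h : ∀ x ∈ s, t ≤ x.val) : s.card ≤ n - t := by
  rw [← Finset.card_map Fin.valEmbedding, ← Nat.card_Ico]
  refine Finset.card_le_card fun x hx => ?_
  obtain ⟨y, hy, rfl⟩ := Finset.mem_map.mp hx
  exact Finset.mem_Ico.mpr ⟨h y hy, y.isLt⟩

theorem SimpleGraph.colorable_succ_of_truncate {V : Type*} (G : SimpleGraph V) (f : V → ℕ)
    (t : ℕ) (hf : ∀ u v, G.Adj u v → f u ≠ f v)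
    (hlt : ∀ u v, G.Adj u v → f u < t ∨ f v < t) :
    G.Colorable (t + 1) :=
  ⟨SimpleGraph.Coloring.mk (fun v => ⟨min (f v) t, by omega⟩) fun {u v} huv heq => by
    have hne := hf u v huv
    have hlt := hlt u v huv
    have hmin : min (f u) t = min (f v) t := congrArg Fin.val heq
    omega⟩

namespace kneserGraph

variable {n k : ℕ}

theorem adj_iff {A B : {s : Finset (Fin n) // s.card = k}} :
    (kneserGraph n k).Adj A B ↔ A ≠ B ∧ Disjoint A.1 B.1 := by
  simp [kneserGraph, disjoint_comm]

theorem nonempty (hk : 1 ≤ k) (A : {s : Finset (Fin n) // s.card = k}) : A.1.Nonempty :=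
  Finset.card_pos.mp (A.2.symm ▸ hk)

theorem min'_ne_of_adj (hk : 1 ≤ k) {A B : {s : Finset (Fin n) // s.card = k}}
    (hAB : (kneserGraph n k).Adj A B) : A.1.min' (nonempty hk A) ≠ B.1.min' (nonempty hk B) :=
  fun h => Finset.disjoint_left.mp (adj_iff.mp hAB).2 (A.1.min'_mem _) (h ▸ B.1.min'_mem _)

theorem min'_lt_or_min'_lt_of_adj (hk : 1 ≤ k) {A B : {s : Finset (Fin n) // s.card = k}}
    (hAB : (kneserGraph n k).Adj A B) :
    (A.1.min' (nonempty hk A)).val < n - 2 * k + 1 ∨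
      (B.1.min' (nonempty hk B)).val < n - 2 * k + 1 := by
  by_contra! h
  have hunion : ∀ x ∈ A.1 ∪ B.1, n - 2 * k + 1 ≤ x.val := by
    intro x hx
    rcases Finset.mem_union.mp hx with hx | hx
    · exact h.1.trans (Finset.min'_le _ _ hx)
    · exact h.2.trans (Finset.min'_le _ _ hx)
  have hcard := Finset.card_le_sub_of_forall_le_val hunion
  rw [Finset.card_union_of_disjoint (adj_iff.mp hAB).2, A.2, B.2] at hcard
  omega

end kneserGraph

theorem kneser_chromaticNumber_le_general (n k : ℕ) (hk : 1 ≤ k) :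
    (kneserGraph n k).chromaticNumber ≤ (n - 2 * k + 2 : ℕ) := by
  let leastElt : {s : Finset (Fin n) // s.card = k} → ℕ :=
    fun A => (A.1.min' (kneserGraph.nonempty hk A)).val
  have hcol : (kneserGraph n k).Colorable (n - 2 * k + 1 + 1) :=
    (kneserGraph n k).colorable_succ_of_truncate leastElt (n - 2 * k + 1)
      (fun _ _ hAB => Fin.val_ne_of_ne (kneserGraph.min'_ne_of_adj hk hAB))
      (fun _ _ => kneserGraph.min'_lt_or_min'_lt_of_adj hk)
  exact hcol.chromaticNumber_le

theorem kneser_chromaticNumber_le (n k : ℕ) (hk : 1 ≤ k) (hn : 2 * k - 1 ≤ n) :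
    (kneserGraph n k).chromaticNumber ≤ (n - 2 * k + 2 : ℕ) :=
  kneser_chromaticNumber_le_general n k hk
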